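/- arXiv:2111.13846 — 3 statements merged into one kernel-verified Lean document; each statement's English description precedes it below -/
import Mathlib

section
/- Let q be a real number with 0 < q < 1, let s > 0, let p ∈ [0,1], and let b ≥ 1 be an integer. Then q · ∫₀^∞ [1 − (1 − p·s/(v+s))^b] · v^(q−1) dv = s^q · Γ(1+q) · Γ(1−q) · 𝔇_b(p,q). -/
open Real MeasureTheory

/-- `𝔇_b(p,q) := ∑_{k=1}^{b} C(b,k) p^k ∏_{j=1}^{k−1} (q−j)/j` (empty product = 1). -/
noncomputable def Dcal (b : ℕ) (p q : ℝ) : ℝ :=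
  ∑ k ∈ Finset.Icc 1 b, (b.choose k : ℝ) * p ^ k *
    ∏ j ∈ Finset.Icc 1 (k - 1), (q - (j : ℝ)) / (j : ℝ)

open Set


lemma real_beta (u v : ℝ) (hu : 0 < u) (hv : 0 < v) :
    ∫ x in (0:ℝ)..1, x ^ (u-1) * (1-x) ^ (v-1) = Real.Gamma u * Real.Gamma v / Real.Gamma (u+v) := by
  have hG : Real.Gamma (u+v) ≠ 0 := (Real.Gamma_pos_of_pos (by linarith)).ne'
  have key : Complex.betaIntegral u v = ((∫ x in (0:ℝ)..1, x ^ (u-1) * (1-x) ^ (v-1) : ℝ) : ℂ) := by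
    rw [Complex.betaIntegral, ← intervalIntegral.integral_ofReal]
    apply intervalIntegral.integral_congr
    intro x hx
    rw [Set.uIcc_of_le (by norm_num : (0:ℝ) ≤ 1)] at hx
    have hx0 : (0:ℝ) ≤ x := hx.1
    have hx1 : (0:ℝ) ≤ 1 - x := by linarith [hx.2]
    dsimp only
    rw [show ((u:ℂ)-1) = ((u-1:ℝ):ℂ) by push_cast; ring,
      show (1-(x:ℂ)) = ((1-x:ℝ):ℂ) by push_cast; ring,
      show ((v:ℂ)-1) = ((v-1:ℝ):ℂ) by push_cast; ring,
      ← Complex.ofReal_cpow hx0, ← Complex.ofReal_cpow hx1, ← Complex.ofReal_mul]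
  have h2 := Complex.Gamma_mul_Gamma_eq_betaIntegral
    (s := (u:ℂ)) (t := (v:ℂ)) (by simpa using hu) (by simpa using hv)
  rw [key, ← Complex.ofReal_add, Complex.Gamma_ofReal, Complex.Gamma_ofReal,
    Complex.Gamma_ofReal, ← Complex.ofReal_mul, ← Complex.ofReal_mul] at h2
  have := Complex.ofReal_injective h2
  field_simp
  linarith [this]

lemma beta_integrable (u v : ℝ) (hu : 0 < u) (hv : 0 < v) :
    IntegrableOn (fun x : ℝ => x ^ (u-1) * (1-x) ^ (v-1)) (Ioo (0:ℝ) 1) := by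
  have h := Complex.betaIntegral_convergent (u := (u:ℂ)) (v := (v:ℂ))
    (by simpa using hu) (by simpa using hv)
  have h2 : IntegrableOn (fun x : ℝ => (x:ℂ) ^ ((u:ℂ)-1) * (1-(x:ℂ)) ^ ((v:ℂ)-1)) (Ioo (0:ℝ) 1) := by
    have := (intervalIntegrable_iff_integrableOn_Ioc_of_le (by norm_num : (0:ℝ) ≤ 1)).mp h
    exact this.mono_set Ioo_subset_Ioc_self
  have h3 : IntegrableOn (fun x : ℝ => ((x:ℂ) ^ ((u:ℂ)-1) * (1-(x:ℂ)) ^ ((v:ℂ)-1)).re) (Ioo (0:ℝ) 1) := h2.re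
  refine h3.congr_fun (fun x hx => ?_) measurableSet_Ioo
  have hx0 : (0:ℝ) ≤ x := hx.1.le
  have hx1 : (0:ℝ) ≤ 1 - x := by linarith [hx.2.le]
  show ((x:ℂ) ^ ((u:ℂ)-1) * (1-(x:ℂ)) ^ ((v:ℂ)-1)).re = _
  rw [show ((u:ℂ)-1) = ((u-1:ℝ):ℂ) by push_cast; ring,
    show (1-(x:ℂ)) = ((1-x:ℝ):ℂ) by push_cast; ring,
    show ((v:ℂ)-1) = ((v-1:ℝ):ℂ) by push_cast; ring,
    ← Complex.ofReal_cpow hx0, ← Complex.ofReal_cpow hx1, ← Complex.ofReal_mul,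
    Complex.ofReal_re]


lemma J_eval (q s : ℝ) (hq0 : 0 < q) (hq1 : q < 1) (hs : 0 < s) (k : ℕ) (hk : 1 ≤ k) :
    IntegrableOn (fun v : ℝ => v ^ (q-1) * ((v+s)^k)⁻¹) (Ioi (0:ℝ)) ∧
    ∫ v in Ioi (0:ℝ), v ^ (q-1) * ((v+s)^k)⁻¹ =
      s ^ (q - (k:ℝ)) * (Real.Gamma ((k:ℝ) - q) * Real.Gamma q / (Nat.factorial (k-1))) := by
  set f : ℝ → ℝ := fun t => s / t - s with hf
  set g : ℝ → ℝ := fun v => v ^ (q-1) * ((v+s)^k)⁻¹ with hg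
  have hk1 : (1:ℝ) ≤ (k:ℝ) := by exact_mod_cast hk
  have himg : f '' Ioo (0:ℝ) 1 = Ioi (0:ℝ) := by
    ext y
    constructor
    · rintro ⟨t, ⟨ht0, ht1⟩, rfl⟩
      have : s < s / t := by
        rw [lt_div_iff₀ ht0]; nlinarith
      simp only [hf, mem_Ioi]; linarith
    · intro hy
      have hy' : (0:ℝ) < y := hy
      refine ⟨s / (y + s), ⟨by positivity, ?_⟩, ?_⟩
      · rw [div_lt_one (by linarith)]; linarith
      · simp only [hf]
        rw [div_div_eq_mul_div, mul_div_assoc]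
        field_simp
        ring
  have hderiv : ∀ t ∈ Ioo (0:ℝ) 1, HasDerivWithinAt f (-(s / t^2)) (Ioo (0:ℝ) 1) t := by
    intro t ht
    have h1 : HasDerivAt f (s * (-(t^2)⁻¹)) t := by
      simpa [hf, div_eq_mul_inv] using ((hasDerivAt_inv ht.1.ne').const_mul s).sub_const s
    have : s * (-(t^2)⁻¹) = -(s / t^2) := by field_simp
    exact (this ▸ h1).hasDerivWithinAt
  have hinj : InjOn f (Ioo (0:ℝ) 1) := by
    intro a ha b hb h
    have h2 : s / a = s / b := by simp only [hf] at h; linarith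
    rw [div_eq_div_iff ha.1.ne' hb.1.ne'] at h2
    exact (mul_left_cancel₀ hs.ne' h2).symm
  have hpt : ∀ t ∈ Ioo (0:ℝ) 1, |(-(s / t^2))| • g (f t)
      = s ^ (q - (k:ℝ)) * (t ^ ((k:ℝ) - q - 1) * (1-t) ^ (q-1)) := by
    intro t ht
    have ht0 := ht.1
    have ht1 : (0:ℝ) < 1 - t := by linarith [ht.2]
    have hft : f t = s * (1-t) / t := by simp only [hf]; field_simp
    have hfts : f t + s = s / t := by simp only [hf]; ring
    have habs : |(-(s / t^2))| = s / t^2 := by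
      rw [abs_neg, abs_of_pos (by positivity)]
    rw [habs, smul_eq_mul, hg]
    simp only
    rw [hft] at hfts ⊢
    rw [hfts, div_pow]
    rw [Real.div_rpow (by positivity) ht0.le, Real.mul_rpow hs.le ht1.le]
    rw [Real.rpow_sub hs q 1, Real.rpow_sub ht0 q 1, Real.rpow_one, Real.rpow_one]
    rw [show q - (k:ℝ) = q - (k:ℝ) from rfl, Real.rpow_sub hs q (k:ℝ),
      show (k:ℝ) - q - 1 = (k:ℝ) - q - 1 from rfl, Real.rpow_sub ht0 ((k:ℝ) - q) 1,
      Real.rpow_sub ht0 (k:ℝ) q, Real.rpow_natCast, Real.rpow_natCast, Real.rpow_one]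
    have h1 : t ^ q ≠ 0 := by positivity
    have h2 : s ^ q ≠ 0 := by positivity
    have h3 : (t:ℝ) ^ k ≠ 0 := by positivity
    have h4 : (s:ℝ) ^ k ≠ 0 := by positivity
    field_simp
  have hbeta : IntegrableOn (fun t : ℝ => s ^ (q - (k:ℝ)) *
      (t ^ ((k:ℝ) - q - 1) * (1-t) ^ (q-1))) (Ioo (0:ℝ) 1) := by
    have h5 : IntegrableOn (fun t : ℝ => s ^ (q - (k:ℝ)) * (t ^ (((k:ℝ) - q)-1) * (1-t) ^ (q-1))) (Ioo (0:ℝ) 1) :=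
      (beta_integrable ((k:ℝ) - q) q (by linarith) hq0).const_mul (s ^ (q - (k:ℝ)))
    refine h5.congr_fun (fun t ht => ?_) measurableSet_Ioo
    norm_num
  have hint : IntegrableOn g (Ioi (0:ℝ)) := by
    rw [← himg, integrableOn_image_iff_integrableOn_abs_deriv_smul measurableSet_Ioo hderiv hinj]
    exact hbeta.congr_fun (fun t ht => (hpt t ht).symm) measurableSet_Ioo
  refine ⟨hint, ?_⟩
  have hchg := integral_image_eq_integral_abs_deriv_smul measurableSet_Ioo hderiv hinj g
  rw [himg] at hchg
  rw [hchg, setIntegral_congr_fun measurableSet_Ioo hpt, integral_const_mul]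
  congr 1
  have : ∫ t in Ioo (0:ℝ) 1, t ^ ((k:ℝ) - q - 1) * (1-t) ^ (q-1)
      = ∫ t in (0:ℝ)..1, t ^ (((k:ℝ) - q) - 1) * (1-t) ^ (q-1) := by
    rw [intervalIntegral.integral_of_le (by norm_num : (0:ℝ) ≤ 1),
      ← integral_Ioc_eq_integral_Ioo]
  rw [this, real_beta ((k:ℝ) - q) q (by linarith) hq0]
  have hkk : (k:ℝ) - q + q = (k:ℝ) := by ring
  rw [hkk]
  rw [show ((k:ℝ)) = ((k-1:ℕ):ℝ) + 1 by rw [Nat.cast_sub hk]; push_cast; ring,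
    Real.Gamma_nat_eq_factorial]


lemma binom_expand (x : ℝ) (b : ℕ) :
    1 - (1-x)^b = ∑ k ∈ Finset.Icc 1 b, (b.choose k : ℝ) * (-1)^(k+1) * x^k := by
  have hset : Finset.range (b+1) = insert 0 (Finset.Icc 1 b) := by
    ext n; simp [Nat.lt_succ_iff]; omega
  have h : (1 - x)^b = ((-x) + 1)^b := by ring_nf
  rw [h, add_pow]
  rw [hset, Finset.sum_insert (by simp)]
  simp only [pow_zero, one_pow, Nat.choose_zero_right, Nat.cast_one, one_mul, mul_one]
  rw [show ∀ S : ℝ, 1 - (1 + S) = -S from fun S => by ring]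
  rw [← Finset.sum_neg_distrib]
  apply Finset.sum_congr rfl
  intro k hk
  rw [neg_pow]
  push_cast
  ring

lemma gamma_prod (q : ℝ) (hq1 : q < 1) (k : ℕ) (hk : 1 ≤ k) :
    Real.Gamma ((k:ℝ) - q) = Real.Gamma (1 - q) * ∏ j ∈ Finset.Icc 1 (k-1), ((j:ℝ) - q) := by
  induction k with
  | zero => omega
  | succ n ih =>
    rcases Nat.eq_or_lt_of_le hk with h | h
    · simp [← h]
    · have hn : 1 ≤ n := by omega
      have hne : (n:ℝ) - q ≠ 0 := by
        have : (1:ℝ) ≤ (n:ℝ) := by exact_mod_cast hn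
        linarith
      have h1 : ((n+1:ℕ):ℝ) - q = ((n:ℝ) - q) + 1 := by push_cast; ring
      rw [h1, Real.Gamma_add_one hne, ih hn]
      rw [show (n+1)-1 = n from rfl]
      rw [show n = (n-1)+1 from (Nat.succ_pred_eq_of_pos hn).symm]
      rw [Finset.prod_Icc_succ_top (by omega : 1 ≤ (n-1)+1)]
      rw [← Nat.succ_pred_eq_of_pos hn]
      push_cast [Nat.cast_sub hn]
      ring

lemma prod_Icc_fact (n : ℕ) : ∏ j ∈ Finset.Icc 1 n, (j:ℝ) = Nat.factorial n := by
  induction n with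
  | zero => simp
  | succ m ih =>
    rw [Finset.prod_Icc_succ_top (by omega : 1 ≤ m+1), ih]
    push_cast [Nat.factorial_succ]
    ring

theorem stmt0 (q s p : ℝ) (b : ℕ) (hq0 : 0 < q) (hq1 : q < 1) (hs : 0 < s)
    (hp0 : 0 ≤ p) (hp1 : p ≤ 1) (hb : 1 ≤ b) :
    q * ∫ v in Set.Ioi (0 : ℝ), (1 - (1 - p * s / (v + s)) ^ b) * v ^ (q - 1) =
      s ^ q * Real.Gamma (1 + q) * Real.Gamma (1 - q) * Dcal b p q := by
  have hpt2 : ∀ v ∈ Ioi (0:ℝ), (1 - (1 - p * s / (v + s)) ^ b) * v ^ (q - 1)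
      = ∑ k ∈ Finset.Icc 1 b, (((b.choose k : ℝ) * (-1)^(k+1) * (p*s)^k)
          * (v ^ (q-1) * ((v+s)^k)⁻¹)) := by
    intro v hv
    have hvs : (0:ℝ) < v + s := by have := mem_Ioi.mp hv; linarith
    rw [binom_expand (p * s / (v+s)) b, Finset.sum_mul]
    apply Finset.sum_congr rfl
    intro k hk
    rw [div_pow]
    field_simp
  rw [setIntegral_congr_fun measurableSet_Ioi hpt2]
  rw [integral_finset_sum _
    (fun k hk => ((J_eval q s hq0 hq1 hs k (Finset.mem_Icc.mp hk).1).1.const_mul _))]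
  simp only [integral_const_mul]
  rw [Finset.mul_sum, Dcal, Finset.mul_sum]
  apply Finset.sum_congr rfl
  intro k hk
  obtain ⟨hk1, hkb⟩ := Finset.mem_Icc.mp hk
  rw [(J_eval q s hq0 hq1 hs k hk1).2]
  have hfact : (Nat.factorial (k-1) : ℝ) ≠ 0 := by
    exact_mod_cast (Nat.factorial_ne_zero (k-1))
  have hss : (s:ℝ)^k * s^(q-(k:ℝ)) = s^q := by
    rw [← Real.rpow_natCast s k, ← Real.rpow_add hs]; ring_nf
  have hqg : q * Real.Gamma q = Real.Gamma (1+q) := by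
    rw [show (1:ℝ)+q = q+1 by ring, Real.Gamma_add_one hq0.ne']
  have hsign : ((-1:ℝ))^(k+1) = (-1:ℝ)^(k-1) := by
    rw [show k+1 = (k-1)+2 by omega, pow_add]; norm_num
  have hprod : ∏ j ∈ Finset.Icc 1 (k-1), (q - (j:ℝ))/(j:ℝ)
      = ((-1:ℝ)^(k+1) * ∏ j ∈ Finset.Icc 1 (k-1), ((j:ℝ) - q)) / (Nat.factorial (k-1)) := by
    rw [Finset.prod_div_distrib, prod_Icc_fact]
    congr 1
    calc ∏ j ∈ Finset.Icc 1 (k-1), (q - (j:ℝ))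
        = ∏ j ∈ Finset.Icc 1 (k-1), ((-1) * ((j:ℝ) - q)) := by
          apply Finset.prod_congr rfl; intros; ring
      _ = (-1:ℝ)^((Finset.Icc 1 (k-1)).card) * ∏ j ∈ Finset.Icc 1 (k-1), ((j:ℝ) - q) := by
          rw [Finset.prod_mul_distrib, Finset.prod_const]
      _ = (-1:ℝ)^(k+1) * ∏ j ∈ Finset.Icc 1 (k-1), ((j:ℝ) - q) := by
          rw [Nat.card_Icc, show k-1+1-1 = k-1 from by omega, hsign]
  rw [gamma_prod q hq1 k hk1, hprod, mul_pow p s, ← hss, ← hqg]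
  field_simp
end

section
/- Let λ ≥ 0, μ ≥ 0, r ≥ 0 be real numbers and let m ≥ 0 be real. Then ∫₀^r (1 − exp(−2λ·√(r²−u²))) du ≤ λ·π·r²/2, and consequently 1 − exp(−λ·m·r − 2μ·∫₀^r (1 − exp(−2λ·√(r²−u²))) du) ≤ 1 − exp(−λ·m·r − λ·μ·π·r²). -/
open Real MeasureTheory intervalIntegral

lemma int_sqrt_unit : ∫ x in (0:ℝ)..1, Real.sqrt (1 - x ^ 2) = π / 4 := by
  have heven : ∫ x in (-1:ℝ)..0, Real.sqrt (1 - x ^ 2)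
      = ∫ x in (0:ℝ)..1, Real.sqrt (1 - x ^ 2) := by
    have h := intervalIntegral.integral_comp_neg (a := (0:ℝ)) (b := 1)
      (fun x => Real.sqrt (1 - x ^ 2))
    simp only [neg_sq, neg_zero] at h
    exact h.symm
  have hsplit : ∫ x in (-1:ℝ)..1, Real.sqrt (1 - x ^ 2)
      = (∫ x in (-1:ℝ)..0, Real.sqrt (1 - x ^ 2))
        + ∫ x in (0:ℝ)..1, Real.sqrt (1 - x ^ 2) := by
    rw [intervalIntegral.integral_add_adjacent_intervals] <;>
      exact (Continuous.intervalIntegrable (by continuity) _ _)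
  have h := integral_sqrt_one_sub_sq
  rw [hsplit, heven] at h
  linarith

lemma int_sqrt (r : ℝ) (hr : 0 ≤ r) :
    ∫ u in (0:ℝ)..r, Real.sqrt (r ^ 2 - u ^ 2) = π * r ^ 2 / 4 := by
  rcases eq_or_lt_of_le hr with h | h
  · simp [← h]
  have hne : r ≠ 0 := ne_of_gt h
  have key : ∀ u : ℝ, Real.sqrt (r ^ 2 - u ^ 2) = r * Real.sqrt (1 - (u / r) ^ 2) := by
    intro u
    rw [show r ^ 2 - u ^ 2 = r ^ 2 * (1 - (u / r) ^ 2) by field_simp,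
      Real.sqrt_mul (sq_nonneg r), Real.sqrt_sq hr]
  simp_rw [key]
  rw [intervalIntegral.integral_const_mul,
    intervalIntegral.integral_comp_div (fun x => Real.sqrt (1 - x ^ 2)) hne]
  simp only [zero_div, div_self hne, smul_eq_mul, int_sqrt_unit]
  ring

theorem stmt5 (lam mu r m : ℝ) (hlam : 0 ≤ lam) (hmu : 0 ≤ mu) (hr : 0 ≤ r)
    (hm : 0 ≤ m) :
    (∫ u in (0 : ℝ)..r, (1 - Real.exp (-(2 * lam * Real.sqrt (r ^ 2 - u ^ 2)))))
      ≤ lam * π * r ^ 2 / 2 ∧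
    1 - Real.exp (-(lam * m * r) -
        2 * mu * ∫ u in (0 : ℝ)..r, (1 - Real.exp (-(2 * lam * Real.sqrt (r ^ 2 - u ^ 2)))))
      ≤ 1 - Real.exp (-(lam * m * r) - lam * mu * π * r ^ 2) := by
  have h1 : (∫ u in (0 : ℝ)..r, (1 - Real.exp (-(2 * lam * Real.sqrt (r ^ 2 - u ^ 2)))))
      ≤ lam * π * r ^ 2 / 2 := by
    have hle : (∫ u in (0 : ℝ)..r, (1 - Real.exp (-(2 * lam * Real.sqrt (r ^ 2 - u ^ 2)))))
        ≤ ∫ u in (0 : ℝ)..r, 2 * lam * Real.sqrt (r ^ 2 - u ^ 2) := by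
      apply intervalIntegral.integral_mono_on hr
      · exact (Continuous.intervalIntegrable (by continuity) _ _)
      · exact (Continuous.intervalIntegrable (by continuity) _ _)
      · intro x _
        have := Real.add_one_le_exp (-(2 * lam * Real.sqrt (r ^ 2 - x ^ 2)))
        linarith
    calc _ ≤ ∫ u in (0 : ℝ)..r, 2 * lam * Real.sqrt (r ^ 2 - u ^ 2) := hle
      _ = 2 * lam * (π * r ^ 2 / 4) := by
          rw [intervalIntegral.integral_const_mul, int_sqrt r hr]
      _ = lam * π * r ^ 2 / 2 := by ring
  refine ⟨h1, ?_⟩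
  have : -(lam * m * r) - lam * mu * π * r ^ 2 ≤ -(lam * m * r) - 2 * mu *
      ∫ u in (0 : ℝ)..r, (1 - Real.exp (-(2 * lam * Real.sqrt (r ^ 2 - u ^ 2)))) := by
    have := mul_le_mul_of_nonneg_left h1 (by linarith : (0:ℝ) ≤ 2 * mu)
    nlinarith
  have := Real.exp_le_exp.mpr this
  linarith
end

section
/- Let δ ∈ (0,1), s > 0, λ ≥ 0, p ∈ [0,1], and let b ≥ 1 be an integer. Define G_b(t) := exp(−λ·δ·∫_{t^(2/δ)}^∞ [1 − (1 − p·s/(v+s))^b] · v^(δ−1)/√(v^δ − t²) dv) for t ≥ 0. Then 2·∫₀^∞ (1 − G_b(t)) dt ≤ λ·π·s^δ·Γ(1+δ)·Γ(1−δ)·𝔇_b(p,δ). -/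
open Real MeasureTheory

/-- The per-line factor `G_b(t)` from Theorem 1 of the paper. -/
noncomputable def Gfun (lam δ s p : ℝ) (b : ℕ) (t : ℝ) : ℝ :=
  Real.exp (-(lam * δ * ∫ v in Set.Ioi (t ^ (2 / δ)),
    (1 - (1 - p * s / (v + s)) ^ b) * v ^ (δ - 1) / Real.sqrt (v ^ δ - t ^ 2)))

section aux
open Set

lemma arc_meas (a : ℝ) : Measurable fun t : ℝ => 1 / Real.sqrt (a^2 - t^2) :=
  measurable_const.div ((Real.continuous_sqrt.comp ((continuous_const).sub (continuous_pow 2))).measurable)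

lemma arc_integrable {a : ℝ} (ha : 0 < a) :
    IntegrableOn (fun t => 1 / Real.sqrt (a^2 - t^2)) (Set.Ioo 0 a) := by
  have hbint : IntegrableOn (fun t : ℝ => (a - t) ^ (-(1/2) : ℝ) * (Real.sqrt a)⁻¹) (Set.Ioo 0 a) := by
    apply Integrable.mul_const
    have h1 : IntervalIntegrable (fun x : ℝ => x ^ (-(1/2) : ℝ)) volume 0 a :=
      intervalIntegral.intervalIntegrable_rpow' (by norm_num)
    have h2 := (h1.comp_sub_left a).symm
    simp only [sub_self, sub_zero] at h2
    have := (intervalIntegrable_iff_integrableOn_Ioc_of_le ha.le).mp h2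
    exact this.mono_set Set.Ioo_subset_Ioc_self
  apply hbint.mono' (arc_meas a).aestronglyMeasurable
  filter_upwards [ae_restrict_mem measurableSet_Ioo] with t ht
  obtain ⟨ht0, hta⟩ := ht
  have hat : 0 < a - t := by linarith
  have hsum : 0 < a + t := by linarith
  have key : Real.sqrt a * Real.sqrt (a - t) ≤ Real.sqrt (a^2 - t^2) := by
    rw [← Real.sqrt_mul ha.le]
    apply Real.sqrt_le_sqrt; nlinarith
  have hpos : 0 < Real.sqrt a * Real.sqrt (a - t) :=
    mul_pos (Real.sqrt_pos.mpr ha) (Real.sqrt_pos.mpr hat)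
  have hrw : (a - t) ^ (-(1/2) : ℝ) = (Real.sqrt (a - t))⁻¹ := by
    rw [Real.sqrt_eq_rpow, ← Real.rpow_neg hat.le]
  rw [Real.norm_eq_abs, abs_of_nonneg (by positivity : (0:ℝ) ≤ 1 / Real.sqrt (a^2 - t^2))]
  calc 1 / Real.sqrt (a^2 - t^2) ≤ 1 / (Real.sqrt a * Real.sqrt (a - t)) :=
        one_div_le_one_div_of_le hpos key
    _ = (a - t) ^ (-(1/2) : ℝ) * (Real.sqrt a)⁻¹ := by
        rw [hrw, one_div, mul_inv, mul_comm]


lemma arc_integral {a : ℝ} (ha : 0 < a) :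
    ∫ t in Set.Ioo 0 a, 1 / Real.sqrt (a^2 - t^2) = π / 2 := by
  have hint : IntervalIntegrable (fun t => 1 / Real.sqrt (a^2 - t^2)) volume 0 a := by
    rw [intervalIntegrable_iff_integrableOn_Ioo_of_le ha.le]
    exact arc_integrable ha
  have hftc := intervalIntegral.integral_eq_sub_of_hasDeriv_right_of_le ha.le
    (f := fun t => Real.arcsin (t / a)) (f' := fun t => 1 / Real.sqrt (a^2 - t^2))
    ((Real.continuous_arcsin.comp (continuous_id.div_const a)).continuousOn)
    (fun x hx => by
      obtain ⟨hx0, hxa⟩ := hx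
      have hne1 : x / a ≠ -1 := by
        have : 0 < x / a := div_pos hx0 ha
        linarith
      have hne2 : x / a ≠ 1 := by
        have : x / a < 1 := (div_lt_one ha).mpr hxa
        linarith
      have hd : HasDerivAt (fun t : ℝ => Real.arcsin (t / a))
          (1 / Real.sqrt (1 - (x/a)^2) * (1/a)) x :=
        HasDerivAt.comp x (h := fun t : ℝ => t / a) (Real.hasDerivAt_arcsin hne1 hne2) ((hasDerivAt_id x).div_const a)
      have heq : 1 / Real.sqrt (1 - (x/a)^2) * (1/a) = 1 / Real.sqrt (a^2 - x^2) := by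
        have h1 : 1 - (x/a)^2 = (a^2 - x^2) / a^2 := by field_simp
        rw [h1, Real.sqrt_div (by nlinarith) , Real.sqrt_sq ha.le]
        field_simp
      rw [heq] at hd
      exact hd.hasDerivWithinAt)
    hint
  have : Real.arcsin (a / a) - Real.arcsin (0 / a) = π / 2 := by
    rw [div_self ha.ne', zero_div, Real.arcsin_one, Real.arcsin_zero, sub_zero]
  rw [this] at hftc
  rw [← hftc, intervalIntegral.integral_of_le ha.le, integral_Ioc_eq_integral_Ioo]

lemma beta_aux {δ : ℝ} (hδ0 : 0 < δ) (hδ1 : δ < 1) (k : ℕ) (hk : 1 ≤ k) :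
    ∫ x in Set.Ioo (0:ℝ) 1, x ^ (δ-1) * (1-x) ^ ((k:ℝ) - δ - 1)
      = Real.Gamma δ * Real.Gamma ((k:ℝ) - δ) / Real.Gamma (k:ℝ) := by
  have hk1 : (1:ℝ) ≤ (k:ℝ) := by exact_mod_cast hk
  have hkd : 0 < (k:ℝ) - δ := by linarith
  have h := Complex.Gamma_mul_Gamma_eq_betaIntegral (s := (δ:ℂ)) (t := (((k:ℝ) - δ : ℝ) : ℂ))
    (by simpa using hδ0) (by simpa using hkd)
  have hsum : (δ:ℂ) + (((k:ℝ) - δ : ℝ) : ℂ) = ((k:ℝ) : ℂ) := by push_cast; ring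
  rw [hsum] at h
  have hbeta : Complex.betaIntegral (δ:ℂ) (((k:ℝ) - δ : ℝ) : ℂ)
      = ((∫ x in Set.Ioo (0:ℝ) 1, x ^ (δ-1) * (1-x) ^ ((k:ℝ) - δ - 1) : ℝ) : ℂ) := by
    rw [Complex.betaIntegral, intervalIntegral.integral_of_le zero_le_one,
      MeasureTheory.integral_Ioc_eq_integral_Ioo]
    have hcg : ∫ x in Set.Ioo (0:ℝ) 1, (x:ℂ) ^ ((δ:ℂ) - 1) * (1 - (x:ℂ)) ^ ((((k:ℝ) - δ : ℝ):ℂ) - 1)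
        = ∫ x in Set.Ioo (0:ℝ) 1, ((x ^ (δ-1) * (1-x) ^ ((k:ℝ) - δ - 1) : ℝ) : ℂ) := by
      apply setIntegral_congr_fun measurableSet_Ioo
      intro x hx
      obtain ⟨hx0, hx1⟩ := hx
      have h1x : (0:ℝ) < 1 - x := by linarith
      show (x:ℂ) ^ ((δ:ℂ) - 1) * (1 - (x:ℂ)) ^ ((((k:ℝ) - δ : ℝ):ℂ) - 1)
        = ((x ^ (δ-1) * (1-x) ^ ((k:ℝ) - δ - 1) : ℝ) : ℂ)
      rw [show ((δ:ℂ) - 1) = (((δ-1 : ℝ)):ℂ) by push_cast; ring,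
        show ((((k:ℝ) - δ : ℝ):ℂ) - 1) = ((((k:ℝ) - δ - 1 : ℝ)):ℂ) by push_cast; ring,
        show (1 - (x:ℂ)) = (((1 - x : ℝ)):ℂ) by push_cast; ring,
        ← Complex.ofReal_cpow hx0.le, ← Complex.ofReal_cpow h1x.le, ← Complex.ofReal_mul]
    exact hcg.trans (integral_ofReal (𝕜 := ℂ))
  rw [hbeta] at h
  have h2 : ((Real.Gamma δ * Real.Gamma ((k:ℝ) - δ) : ℝ) : ℂ)
      = ((Real.Gamma (k:ℝ) * ∫ x in Set.Ioo (0:ℝ) 1, x ^ (δ-1) * (1-x) ^ ((k:ℝ) - δ - 1) : ℝ) : ℂ) := by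
    push_cast
    rw [← Complex.Gamma_ofReal, ← Complex.Gamma_ofReal, ← Complex.Gamma_ofReal]
    exact h
  have h3 := Complex.ofReal_injective h2
  have hΓk : Real.Gamma (k:ℝ) ≠ 0 := (Real.Gamma_pos_of_pos (by exact_mod_cast hk)).ne'
  rw [eq_div_iff hΓk]
  linarith [h3]

lemma beta_int {δ : ℝ} (hδ0 : 0 < δ) (hδ1 : δ < 1) {s : ℝ} (hs : 0 < s) (k : ℕ) (hk : 1 ≤ k) :
    ∫ v in Set.Ioi (0:ℝ), v ^ (δ-1) / (v+s)^k
      = Real.Gamma δ * Real.Gamma ((k:ℝ) - δ) / Real.Gamma (k:ℝ) * s ^ (δ - (k:ℝ)) := by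
  set φ : ℝ → ℝ := fun x => x / (1 - x) with hφ
  have himg : φ '' Set.Ioo 0 1 = Set.Ioi (0:ℝ) := by
    ext u
    constructor
    · rintro ⟨x, ⟨hx0, hx1⟩, rfl⟩
      exact div_pos hx0 (by linarith)
    · intro hu
      have hu0 : (0:ℝ) < u := hu
      have h1u : (0:ℝ) < 1 + u := by linarith
      refine ⟨u / (1 + u), ⟨div_pos hu0 h1u, (div_lt_one h1u).mpr (by linarith)⟩, ?_⟩
      show u / (1 + u) / (1 - u / (1 + u)) = u
      field_simp
      ring
  have hderiv : ∀ x ∈ Set.Ioo (0:ℝ) 1, HasDerivWithinAt φ (((1-x)^2)⁻¹) (Set.Ioo 0 1) x := by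
    intro x hx
    obtain ⟨hx0, hx1⟩ := hx
    have h1x : (1:ℝ) - x ≠ 0 := by intro h; linarith [sub_eq_zero.mp h]
    have hd : HasDerivAt φ ((1 * (1-x) - x * (0 - 1)) / (1-x)^2) x :=
      (hasDerivAt_id x).div ((hasDerivAt_const x 1).sub (hasDerivAt_id x)) h1x
    have heq2 : (1 * (1-x) - x * (0 - 1)) / (1-x)^2 = ((1-x)^2)⁻¹ := by
      field_simp
      ring
    rw [heq2] at hd
    exact hd.hasDerivWithinAt
  have hinj : Set.InjOn φ (Set.Ioo 0 1) := by
    intro x hx y hy hxy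
    obtain ⟨hx0, hx1⟩ := hx; obtain ⟨hy0, hy1⟩ := hy
    have h1x : (1:ℝ) - x ≠ 0 := by intro h; linarith [sub_eq_zero.mp h]
    have h1y : (1:ℝ) - y ≠ 0 := by intro h; linarith [sub_eq_zero.mp h]
    have := (div_eq_div_iff h1x h1y).mp hxy
    nlinarith [this]
  have hsub := integral_image_eq_integral_abs_deriv_smul measurableSet_Ioo hderiv hinj
    (fun u => u ^ (δ-1) / (1+u)^k)
  rw [himg] at hsub
  have hcongr : ∫ x in Set.Ioo (0:ℝ) 1, |((1-x)^2)⁻¹| • (φ x ^ (δ-1) / (1+φ x)^k)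
      = ∫ x in Set.Ioo (0:ℝ) 1, x ^ (δ-1) * (1-x) ^ ((k:ℝ) - δ - 1) := by
    apply setIntegral_congr_fun measurableSet_Ioo
    intro x hx
    obtain ⟨hx0, hx1⟩ := hx
    have h1x : (0:ℝ) < 1 - x := by linarith
    show |((1-x)^2)⁻¹| • (φ x ^ (δ-1) / (1+φ x)^k) = x ^ (δ-1) * (1-x) ^ ((k:ℝ) - δ - 1)
    have hφx : 1 + φ x = (1-x)⁻¹ := by
      show 1 + x / (1-x) = (1-x)⁻¹
      field_simp
      ring
    have hφpow : φ x ^ (δ-1) = x ^ (δ-1) * (1-x) ^ (-(δ-1)) := by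
      show (x / (1-x)) ^ (δ-1) = _
      rw [Real.div_rpow hx0.le h1x.le, Real.rpow_neg h1x.le, div_eq_mul_inv]
    have hdenom : ((1 + φ x)^k)⁻¹ = (1-x) ^ (k:ℝ) := by
      rw [hφx, inv_pow, inv_inv, ← Real.rpow_natCast]
    have hsq : |((1-x)^2)⁻¹| = (1-x) ^ (-2 : ℝ) := by
      rw [abs_of_nonneg (by positivity), ← Real.rpow_natCast (1-x) 2,
        ← Real.rpow_neg h1x.le]
      norm_num
    have hexp : (1-x) ^ ((k:ℝ) - δ - 1) = (1-x) ^ (-2 : ℝ) * ((1-x) ^ (-(δ-1)) * (1-x) ^ (k:ℝ)) := by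
      rw [← Real.rpow_add h1x, ← Real.rpow_add h1x]
      ring_nf
    rw [smul_eq_mul, div_eq_mul_inv, hφpow, hdenom, hsq, hexp]
    ring
  rw [hcongr] at hsub
  rw [beta_aux hδ0 hδ1 k hk] at hsub
  -- scaling v = s * x
  have hscale := integral_comp_mul_left_Ioi (fun v => v ^ (δ-1) / (v+s)^k) 0 hs
  rw [mul_zero, smul_eq_mul] at hscale
  have hscale' : ∫ x in Set.Ioi (0:ℝ), (s*x) ^ (δ-1) / (s*x+s)^k
      = s⁻¹ * ∫ v in Set.Ioi (0:ℝ), v ^ (δ-1) / (v+s)^k := hscale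
  have hpt : ∫ x in Set.Ioi (0:ℝ), (s*x) ^ (δ-1) / (s*x+s)^k
      = ∫ x in Set.Ioi (0:ℝ), (s ^ (δ-1) * ((s:ℝ)^k)⁻¹) * (x ^ (δ-1) / (1+x)^k) := by
    apply setIntegral_congr_fun measurableSet_Ioi
    intro x hx
    have hx0 : (0:ℝ) < x := hx
    show (s*x) ^ (δ-1) / (s*x+s)^k = (s ^ (δ-1) * ((s:ℝ)^k)⁻¹) * (x ^ (δ-1) / (1+x)^k)
    have h1 : (s*x) ^ (δ-1) = s ^ (δ-1) * x ^ (δ-1) := Real.mul_rpow hs.le hx0.le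
    have h2 : (s*x+s)^k = s^k * (1+x)^k := by
      rw [← mul_pow]; ring_nf
    rw [h1, h2]
    have hsk : ((s:ℝ)^k) ≠ 0 := pow_ne_zero k hs.ne'
    have hxk : ((1+x:ℝ)^k) ≠ 0 := pow_ne_zero k (by linarith)
    field_simp
  have hmain : ∫ v in Set.Ioi (0:ℝ), v ^ (δ-1) / (v+s)^k
      = s * ((s ^ (δ-1) * ((s:ℝ)^k)⁻¹) * (Real.Gamma δ * Real.Gamma ((k:ℝ) - δ) / Real.Gamma (k:ℝ))) := by
    rw [← hsub, ← integral_const_mul, ← hpt, hscale', ← mul_assoc, mul_inv_cancel₀ hs.ne', one_mul]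
  rw [hmain]
  have h1 : s ^ δ = s * s ^ (δ - 1) := by
    have h := Real.rpow_add hs 1 (δ-1)
    rw [Real.rpow_one] at h
    rw [show (1:ℝ) + (δ-1) = δ by ring] at h
    exact h
  have h2 : s ^ (δ - (k:ℝ)) = s ^ δ * ((s:ℝ)^k)⁻¹ := by
    have h := Real.rpow_add hs δ (-(k:ℝ))
    rw [show δ + -(k:ℝ) = δ - (k:ℝ) by ring] at h
    rw [h, Real.rpow_neg hs.le, Real.rpow_natCast]
  rw [h2, h1]
  ring


lemma gamma_prod_s7 {δ : ℝ} (hδ0 : 0 < δ) (hδ1 : δ < 1) : ∀ m : ℕ,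
    (-1:ℝ)^m * (Real.Gamma (((m:ℝ)+1) - δ) / Real.Gamma ((m:ℝ)+1))
      = Real.Gamma (1-δ) * ∏ j ∈ Finset.Icc 1 m, (δ - (j:ℝ)) / (j:ℝ) := by
  intro m
  induction m with
  | zero => simp [Real.Gamma_one]
  | succ m ih =>
    have hm1 : (0:ℝ) < (m:ℝ) + 1 := by positivity
    have hmd : (0:ℝ) < (m:ℝ) + 1 - δ := by linarith
    have hg1 : Real.Gamma (((m+1:ℕ):ℝ) + 1 - δ) = ((m:ℝ) + 1 - δ) * Real.Gamma ((m:ℝ)+1-δ) := by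
      rw [show (((m+1:ℕ):ℝ) + 1 - δ) = ((m:ℝ)+1-δ) + 1 by push_cast; ring]
      exact Real.Gamma_add_one hmd.ne'
    have hg2 : Real.Gamma (((m+1:ℕ):ℝ) + 1) = ((m:ℝ) + 1) * Real.Gamma ((m:ℝ)+1) := by
      rw [show (((m+1:ℕ):ℝ) + 1) = ((m:ℝ)+1) + 1 by push_cast; ring]
      exact Real.Gamma_add_one hm1.ne'
    have hprod : ∏ j ∈ Finset.Icc 1 (m+1), (δ - (j:ℝ)) / (j:ℝ)
        = (∏ j ∈ Finset.Icc 1 m, (δ - (j:ℝ)) / (j:ℝ)) * ((δ - ((m+1:ℕ):ℝ)) / ((m+1:ℕ):ℝ)) :=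
      Finset.prod_Icc_succ_top (Nat.le_add_left 1 m) _
    have hΓm : Real.Gamma ((m:ℝ)+1) ≠ 0 := (Real.Gamma_pos_of_pos hm1).ne'
    have hcast : ((m+1:ℕ):ℝ) = (m:ℝ)+1 := by push_cast; ring
    rw [hg1, hg2, hprod, hcast, ← mul_assoc, ← ih, pow_succ]
    field_simp
    ring

lemma F_expand (b : ℕ) (x : ℝ) :
    1 - (1-x)^b = ∑ k ∈ Finset.Icc 1 b, (b.choose k : ℝ) * (-1)^(k+1) * x^k := by
  have hadd := add_pow (-x) (1:ℝ) b
  simp only [one_pow, mul_one] at hadd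
  have hset : Finset.range (b+1) = insert 0 (Finset.Icc 1 b) := by
    ext y; simp; omega
  rw [show (1:ℝ) - x = -x + 1 by ring, hadd, hset, Finset.sum_insert (by simp)]
  simp only [pow_zero, one_mul, Nat.choose_zero_right, Nat.cast_one]
  have h1 : ∀ S : ℝ, 1 - (1 + S) = -S := fun S => by ring
  rw [h1, ← Finset.sum_neg_distrib]
  apply Finset.sum_congr rfl
  intro k hk
  rw [neg_pow]
  ring

lemma term_meas (δ s : ℝ) (k : ℕ) : Measurable fun v : ℝ => v ^ (δ-1) / (v+s)^k :=
  (measurable_id.pow_const (δ-1)).div ((measurable_id.add_const s).pow_const k)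

lemma term_integrable {δ s : ℝ} (hδ0 : 0 < δ) (hδ1 : δ < 1) (hs : 0 < s) (k : ℕ) (hk : 1 ≤ k) :
    IntegrableOn (fun v : ℝ => v ^ (δ-1) / (v+s)^k) (Set.Ioi 0) := by
  rw [← Set.Ioc_union_Ioi_eq_Ioi (zero_le_one : (0:ℝ) ≤ 1)]
  apply IntegrableOn.union
  · -- on Ioc 0 1, dominate by v^(δ-1) * (s^k)⁻¹
    have hbase : IntegrableOn (fun v : ℝ => v ^ (δ-1)) (Set.Ioc 0 1) :=
      (intervalIntegrable_iff_integrableOn_Ioc_of_le zero_le_one).mp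
        (intervalIntegral.intervalIntegrable_rpow' (by linarith))
    apply (hbase.mul_const ((s^k)⁻¹)).mono' (term_meas δ s k).aestronglyMeasurable
    filter_upwards [ae_restrict_mem measurableSet_Ioc] with v hv
    obtain ⟨hv0, hv1⟩ := hv
    have hvs : (0:ℝ) < v + s := by linarith
    rw [Real.norm_eq_abs, abs_of_nonneg (by positivity)]
    have h1 : v ^ (δ-1) / (v+s)^k ≤ v ^ (δ-1) / s^k := by
      gcongr <;> first | exact Real.rpow_nonneg hv0.le _ | positivity | linarith
    rw [div_eq_mul_inv] at h1
    exact h1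
  · -- on Ioi 1, dominate by v^(δ-1-k)
    have hbase : IntegrableOn (fun v : ℝ => v ^ (δ-1-(k:ℝ))) (Set.Ioi 1) := by
      apply integrableOn_Ioi_rpow_of_lt _ zero_lt_one
      have : (1:ℝ) ≤ (k:ℝ) := by exact_mod_cast hk
      linarith
    apply hbase.mono' (term_meas δ s k).aestronglyMeasurable
    filter_upwards [ae_restrict_mem measurableSet_Ioi] with v hv
    have hv0 : (0:ℝ) < v := lt_trans zero_lt_one hv
    have hvs : (0:ℝ) < v + s := by linarith
    rw [Real.norm_eq_abs, abs_of_nonneg (by positivity)]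
    have h1 : v ^ (δ-1) / (v+s)^k ≤ v ^ (δ-1) / v^k := by
      gcongr <;> first | exact Real.rpow_nonneg hv0.le _ | positivity | linarith
    have h2 : v ^ (δ-1) / v^k = v ^ (δ-1-(k:ℝ)) := by
      rw [← Real.rpow_natCast v k, ← Real.rpow_sub hv0]
    rw [← h2]
    exact h1
end aux

section aux2
open Set
open scoped ENNReal

noncomputable def Ffun (s p : ℝ) (b : ℕ) : ℝ → ℝ := fun v => 1 - (1 - p * s / (v + s)) ^ b

noncomputable def Kfun (δ s p : ℝ) (b : ℕ) : ℝ → ℝ → ℝ :=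
  fun t v => Ffun s p b v * v ^ (δ - 1) / Real.sqrt (v ^ δ - t ^ 2)

noncomputable def k2fun (δ s p : ℝ) (b : ℕ) : ℝ → ℝ → ℝ :=
  fun t v => if t ^ 2 < v ^ δ then Kfun δ s p b t v else 0

section helpers
variable {δ s p : ℝ} {b : ℕ}

lemma Fnn (hs : 0 < s) (hp0 : 0 ≤ p) (hp1 : p ≤ 1) {v : ℝ} (hv : 0 < v) :
    0 ≤ Ffun s p b v := by
  have hvs : (0:ℝ) < v + s := by linarith
  have hx0 : 0 ≤ p * s / (v + s) := by positivity
  have hx1 : p * s / (v + s) ≤ 1 := by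
    rw [div_le_one hvs]
    nlinarith
  have h0 : 0 ≤ 1 - p * s / (v + s) := by linarith
  have h1 : 1 - p * s / (v + s) ≤ 1 := by linarith
  have := pow_le_one₀ h0 h1 (n := b)
  simp only [Ffun]
  linarith

lemma Fmeas (s p : ℝ) (b : ℕ) : Measurable (Ffun s p b) :=
  measurable_const.sub
    (((measurable_const.div (measurable_id.add_const s)).const_sub 1).pow_const b)

lemma Kmeas (δ s p : ℝ) (b : ℕ) (t : ℝ) : Measurable (Kfun δ s p b t) :=
  ((Fmeas s p b).mul (measurable_id.pow_const (δ - 1))).div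
    (Real.continuous_sqrt.measurable.comp
      ((measurable_id.pow_const δ).sub measurable_const))

lemma k2meas (δ s p : ℝ) (b : ℕ) :
    Measurable (fun q : ℝ × ℝ => ENNReal.ofReal (k2fun δ s p b q.1 q.2)) := by
  apply ENNReal.measurable_ofReal.comp
  apply Measurable.ite
  · exact measurableSet_lt (measurable_fst.pow_const 2) (measurable_snd.pow_const δ)
  · exact (((Fmeas s p b).comp measurable_snd).mul (measurable_snd.pow_const (δ - 1))).div
      (Real.continuous_sqrt.measurable.comp
        ((measurable_snd.pow_const δ).sub (measurable_fst.pow_const 2)))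
  · exact measurable_const

lemma FV_eq (hs : 0 < s) (b : ℕ) (δ : ℝ) {v : ℝ} (hv : 0 < v) :
    Ffun s p b v * v ^ (δ-1)
      = ∑ k ∈ Finset.Icc 1 b, ((b.choose k : ℝ) * (-1)^(k+1) * (p*s)^k) * (v ^ (δ-1) / (v+s)^k) := by
  have hvs : (0:ℝ) < v + s := by linarith
  simp only [Ffun]
  rw [F_expand b (p*s/(v+s)), Finset.sum_mul]
  apply Finset.sum_congr rfl
  intro k hk
  rw [div_pow]
  field_simp

lemma W_integrable (hδ0 : 0 < δ) (hδ1 : δ < 1) (hs : 0 < s) (hp0 : 0 ≤ p) (b : ℕ) :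
    IntegrableOn (fun v : ℝ => Ffun s p b v * v ^ (δ-1)) (Set.Ioi 0) := by
  have hg : IntegrableOn
      (fun v : ℝ => ∑ k ∈ Finset.Icc 1 b, ((b.choose k : ℝ) * (p*s)^k) * (v ^ (δ-1) / (v+s)^k))
      (Set.Ioi 0) :=
    integrable_finset_sum _ (fun k hk =>
      ((term_integrable hδ0 hδ1 hs k (Finset.mem_Icc.mp hk).1).const_mul _))
  have hmeasW : AEStronglyMeasurable (fun v : ℝ => Ffun s p b v * v ^ (δ-1))
      (volume.restrict (Set.Ioi 0)) :=
    ((Fmeas s p b).mul (measurable_id'.pow_const (δ-1))).aestronglyMeasurable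
  apply hg.mono' hmeasW
  filter_upwards [ae_restrict_mem measurableSet_Ioi] with v hv
  have hv0 : (0:ℝ) < v := hv
  have hvs : (0:ℝ) < v + s := by linarith
  rw [Real.norm_eq_abs, FV_eq hs b δ hv0]
  refine (Finset.abs_sum_le_sum_abs _ _).trans (Finset.sum_le_sum ?_)
  intro k hk
  have ht : (0:ℝ) ≤ v ^ (δ-1) / (v+s)^k :=
    div_nonneg (Real.rpow_nonneg hv0.le _) (pow_nonneg hvs.le k)
  have habs : |((b.choose k : ℝ) * (-1)^(k+1) * (p*s)^k) * (v ^ (δ-1) / (v+s)^k)|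
      = (b.choose k : ℝ) * (p*s)^k * (v ^ (δ-1) / (v+s)^k) := by
    rw [abs_mul, abs_mul, abs_mul, abs_pow, abs_neg, abs_one, one_pow, mul_one,
      abs_of_nonneg ht, abs_of_nonneg (pow_nonneg (mul_nonneg hp0 hs.le) k), Nat.abs_cast]
  rw [habs]

lemma W_value (hδ0 : 0 < δ) (hδ1 : δ < 1) (hs : 0 < s) (b : ℕ) :
    δ * ∫ v in Set.Ioi (0:ℝ), Ffun s p b v * v ^ (δ-1)
      = s ^ δ * Real.Gamma (1+δ) * Real.Gamma (1-δ) * Dcal b p δ := by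
  have hIeq : ∫ v in Set.Ioi (0:ℝ), Ffun s p b v * v ^ (δ-1)
      = ∑ k ∈ Finset.Icc 1 b, ((b.choose k : ℝ) * (-1)^(k+1) * (p*s)^k)
          * (Real.Gamma δ * Real.Gamma ((k:ℝ) - δ) / Real.Gamma (k:ℝ) * s ^ (δ - (k:ℝ))) := by
    rw [setIntegral_congr_fun measurableSet_Ioi (fun v hv => FV_eq hs b δ hv)]
    rw [integral_finset_sum _ (fun k hk =>
      ((term_integrable hδ0 hδ1 hs k (Finset.mem_Icc.mp hk).1).const_mul _))]
    refine Finset.sum_congr rfl (fun k hk => ?_)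
    rw [integral_const_mul, beta_int hδ0 hδ1 hs k (Finset.mem_Icc.mp hk).1]
  rw [hIeq, Finset.mul_sum, Dcal, Finset.mul_sum]
  apply Finset.sum_congr rfl
  intro k hk
  obtain ⟨hk1, hkb⟩ := Finset.mem_Icc.mp hk
  have hg := gamma_prod_s7 hδ0 hδ1 (k-1)
  have hc : ((k-1:ℕ):ℝ) = (k:ℝ) - 1 := by
    rw [Nat.cast_sub hk1, Nat.cast_one]
  rw [hc, show ((k:ℝ)-1)+1-δ = (k:ℝ)-δ by ring, show ((k:ℝ)-1)+1 = (k:ℝ) by ring] at hg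
  have hsgn : (-1:ℝ)^(k+1) = (-1:ℝ)^(k-1) := by
    have h2 : k+1 = (k-1)+2 := by omega
    rw [h2, pow_add]
    norm_num
  have hE : (-1:ℝ)^(k+1) * (Real.Gamma ((k:ℝ)-δ) / Real.Gamma (k:ℝ))
      = Real.Gamma (1-δ) * ∏ j ∈ Finset.Icc 1 (k-1), (δ - (j:ℝ)) / (j:ℝ) := by
    rw [hsgn]; exact hg
  have hsk : (p*s)^k * s ^ (δ - (k:ℝ)) = p^k * s ^ δ := by
    rw [mul_pow, ← Real.rpow_natCast s k, mul_assoc, ← Real.rpow_add hs,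
      show (k:ℝ) + (δ - (k:ℝ)) = δ by ring]
  have hgd : Real.Gamma (1+δ) = δ * Real.Gamma δ := by
    rw [add_comm]; exact Real.Gamma_add_one hδ0.ne'
  calc δ * (((b.choose k : ℝ) * (-1)^(k+1) * (p*s)^k)
        * (Real.Gamma δ * Real.Gamma ((k:ℝ) - δ) / Real.Gamma (k:ℝ) * s ^ (δ - (k:ℝ))))
      = (δ * Real.Gamma δ) * ((-1:ℝ)^(k+1) * (Real.Gamma ((k:ℝ)-δ) / Real.Gamma (k:ℝ)))
          * ((p*s)^k * s ^ (δ - (k:ℝ))) * (b.choose k : ℝ) := by ring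
    _ = s ^ δ * Real.Gamma (1+δ) * Real.Gamma (1-δ)
          * ((b.choose k : ℝ) * p ^ k * ∏ j ∈ Finset.Icc 1 (k-1), (δ - (j:ℝ)) / (j:ℝ)) := by
        rw [hE, hsk, ← hgd]; ring

end helpers

theorem stmt7 (δ s lam p : ℝ) (b : ℕ) (hδ0 : 0 < δ) (hδ1 : δ < 1) (hs : 0 < s)
    (hlam : 0 ≤ lam) (hp0 : 0 ≤ p) (hp1 : p ≤ 1) (hb : 1 ≤ b) :
    2 * ∫ t in Set.Ioi (0 : ℝ), (1 - Gfun lam δ s p b t) ≤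
      lam * π * s ^ δ * Real.Gamma (1 + δ) * Real.Gamma (1 - δ) * Dcal b p δ := by
  set L : ℝ → ℝ≥0∞ := fun t => ∫⁻ v in Set.Ioi (0:ℝ), ENNReal.ofReal (k2fun δ s p b t v) with hLdef
  have hLmeas : Measurable L := Measurable.lintegral_prod_right' (k2meas δ s p b)
  -- pointwise identification of Gfun
  have hGeq : ∀ t ∈ Set.Ioi (0:ℝ),
      Gfun lam δ s p b t = Real.exp (-(lam * δ * (L t).toReal)) := by
    intro t ht
    have ht0 : (0:ℝ) < t := ht
    have hc0 : (0:ℝ) < t ^ ((2:ℝ)/δ) := Real.rpow_pos_of_pos ht0 _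
    have hcδ : (t ^ ((2:ℝ)/δ)) ^ δ = t ^ 2 := by
      rw [← Real.rpow_mul ht0.le, div_mul_cancel₀ _ hδ0.ne',
        show (2:ℝ) = ((2:ℕ):ℝ) by norm_num, Real.rpow_natCast]
    have hKnn : ∀ v ∈ Set.Ioi (t ^ ((2:ℝ)/δ)), 0 ≤ Kfun δ s p b t v := by
      intro v hv
      have hv0 : (0:ℝ) < v := lt_trans hc0 hv
      exact div_nonneg (mul_nonneg (Fnn hs hp0 hp1 hv0) (Real.rpow_nonneg hv0.le _))
        (Real.sqrt_nonneg _)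
    have hLt : L t = ∫⁻ v in Set.Ioi (t ^ ((2:ℝ)/δ)), ENNReal.ofReal (Kfun δ s p b t v) := by
      rw [hLdef]
      simp only
      rw [← Set.Ioc_union_Ioi_eq_Ioi hc0.le,
        lintegral_union measurableSet_Ioi Set.Ioc_disjoint_Ioi_same]
      have h0 : ∫⁻ v in Set.Ioc (0:ℝ) (t ^ ((2:ℝ)/δ)), ENNReal.ofReal (k2fun δ s p b t v) = 0 := by
        rw [setLIntegral_congr_fun measurableSet_Ioc
          (fun v hv => ?_), lintegral_zero]
        have hle : v ^ δ ≤ t ^ 2 := by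
          rw [← hcδ]
          exact Real.rpow_le_rpow hv.1.le hv.2 hδ0.le
        simp only [k2fun, if_neg (not_lt.mpr hle), ENNReal.ofReal_zero]
      rw [h0, zero_add]
      apply setLIntegral_congr_fun measurableSet_Ioi
      intro v hv
      have hlt : t ^ 2 < v ^ δ := by
        rw [← hcδ]
        exact Real.rpow_lt_rpow hc0.le hv hδ0
      simp only [k2fun, if_pos hlt]
    have hInn : ∫ v in Set.Ioi (t ^ ((2:ℝ)/δ)), Kfun δ s p b t v = (L t).toReal := by
      rw [MeasureTheory.integral_eq_lintegral_of_nonneg_ae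
        ((ae_restrict_iff' measurableSet_Ioi).mpr (ae_of_all _ hKnn))
        (Kmeas δ s p b t).aestronglyMeasurable, hLt]
    have hGdef : Gfun lam δ s p b t
        = Real.exp (-(lam * δ * ∫ v in Set.Ioi (t ^ ((2:ℝ)/δ)), Kfun δ s p b t v)) := rfl
    rw [hGdef, hInn]
  -- the comparison function J
  set J : ℝ → ℝ := fun t => 1 - Real.exp (-(lam * δ * (L t).toReal)) with hJdef
  have hJmeas : Measurable J :=
    measurable_const.sub
      (Real.measurable_exp.comp (((hLmeas.ennreal_toReal).const_mul (lam * δ)).neg))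
  have hJnn : ∀ t, 0 ≤ J t := by
    intro t
    have hx : 0 ≤ lam * δ * (L t).toReal :=
      mul_nonneg (mul_nonneg hlam hδ0.le) ENNReal.toReal_nonneg
    have : Real.exp (-(lam * δ * (L t).toReal)) ≤ 1 := Real.exp_le_one_iff.mpr (by linarith)
    simp only [hJdef]
    linarith
  have hJle : ∀ t, J t ≤ lam * δ * (L t).toReal := by
    intro t
    have := Real.add_one_le_exp (-(lam * δ * (L t).toReal))
    simp only [hJdef]
    linarith
  have hcong : ∫ t in Set.Ioi (0:ℝ), (1 - Gfun lam δ s p b t) = ∫ t in Set.Ioi (0:ℝ), J t :=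
    setIntegral_congr_fun measurableSet_Ioi (fun t ht => by rw [hGeq t ht])
  have hJint : ∫ t in Set.Ioi (0:ℝ), J t
      = (∫⁻ t in Set.Ioi (0:ℝ), ENNReal.ofReal (J t)).toReal :=
    integral_eq_lintegral_of_nonneg_ae (ae_of_all _ hJnn) hJmeas.aestronglyMeasurable
  -- bound the lintegral
  have hlb : (∫⁻ t in Set.Ioi (0:ℝ), ENNReal.ofReal (J t))
      ≤ ENNReal.ofReal (lam * δ) * ∫⁻ t in Set.Ioi (0:ℝ), L t := by
    rw [← lintegral_const_mul' _ _ ENNReal.ofReal_ne_top]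
    apply lintegral_mono
    intro t
    calc ENNReal.ofReal (J t) ≤ ENNReal.ofReal (lam * δ * (L t).toReal) :=
          ENNReal.ofReal_le_ofReal (hJle t)
      _ = ENNReal.ofReal (lam * δ) * ENNReal.ofReal ((L t).toReal) :=
          ENNReal.ofReal_mul (mul_nonneg hlam hδ0.le)
      _ ≤ ENNReal.ofReal (lam * δ) * L t := mul_le_mul_right ENNReal.ofReal_toReal_le _
  -- Tonelli
  have hswap : ∫⁻ t in Set.Ioi (0:ℝ), L t
      = ∫⁻ v in Set.Ioi (0:ℝ), ∫⁻ t in Set.Ioi (0:ℝ), ENNReal.ofReal (k2fun δ s p b t v) :=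
    lintegral_lintegral_swap (k2meas δ s p b).aemeasurable
  -- W
  have hW : IntegrableOn (fun v : ℝ => Ffun s p b v * v ^ (δ-1)) (Set.Ioi 0) :=
    W_integrable hδ0 hδ1 hs hp0 b
  set W := ∫ v in Set.Ioi (0:ℝ), Ffun s p b v * v ^ (δ-1) with hWdef
  have hWnn : 0 ≤ W :=
    setIntegral_nonneg measurableSet_Ioi
      (fun v hv => mul_nonneg (Fnn hs hp0 hp1 hv) (Real.rpow_nonneg (le_of_lt hv) _))
  -- inner integral computation
  have hinner : ∀ v ∈ Set.Ioi (0:ℝ),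
      (∫⁻ t in Set.Ioi (0:ℝ), ENNReal.ofReal (k2fun δ s p b t v))
        = ENNReal.ofReal (Ffun s p b v * v ^ (δ-1)) * ENNReal.ofReal (π/2) := by
    intro v hv
    have hv0 : (0:ℝ) < v := hv
    set a := v ^ (δ/2) with hadef
    have ha0 : (0:ℝ) < a := Real.rpow_pos_of_pos hv0 _
    have ha2 : a ^ 2 = v ^ δ := by
      rw [hadef, ← Real.rpow_natCast (v ^ (δ/2)) 2, ← Real.rpow_mul hv0.le]
      norm_num
    have hFnnv : 0 ≤ Ffun s p b v * v ^ (δ-1) :=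
      mul_nonneg (Fnn hs hp0 hp1 hv0) (Real.rpow_nonneg hv0.le _)
    have hdisj : Disjoint (Set.Ioo (0:ℝ) a) (Set.Ici a) :=
      Set.disjoint_left.mpr (fun x hx hx' => absurd hx.2 (not_lt.mpr hx'))
    rw [← Set.Ioo_union_Ici_eq_Ioi ha0, lintegral_union measurableSet_Ici hdisj]
    have hzero : ∫⁻ t in Set.Ici a, ENNReal.ofReal (k2fun δ s p b t v) = 0 := by
      rw [setLIntegral_congr_fun measurableSet_Ici (fun t ht => ?_),
        lintegral_zero]
      have hle : v ^ δ ≤ t ^ 2 := by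
        rw [← ha2]
        exact pow_le_pow_left₀ ha0.le ht 2
      simp only [k2fun, if_neg (not_lt.mpr hle), ENNReal.ofReal_zero]
    have hmain : ∫⁻ t in Set.Ioo (0:ℝ) a, ENNReal.ofReal (k2fun δ s p b t v)
        = ENNReal.ofReal (Ffun s p b v * v ^ (δ-1)) * ENNReal.ofReal (π/2) := by
      have hcg : ∀ t ∈ Set.Ioo (0:ℝ) a, ENNReal.ofReal (k2fun δ s p b t v)
          = ENNReal.ofReal (Ffun s p b v * v ^ (δ-1))
              * ENNReal.ofReal (1 / Real.sqrt (a^2 - t^2)) := by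
        intro t ht
        have htv : t ^ 2 < v ^ δ := by
          rw [← ha2]
          exact pow_lt_pow_left₀ ht.2 ht.1.le two_ne_zero
        simp only [k2fun, if_pos htv, Kfun]
        rw [← ha2, div_eq_mul_one_div, ENNReal.ofReal_mul hFnnv]
      rw [setLIntegral_congr_fun measurableSet_Ioo hcg,
        lintegral_const_mul' _ _ ENNReal.ofReal_ne_top]
      congr 1
      rw [← ofReal_integral_eq_lintegral_ofReal (arc_integrable ha0)
        (ae_of_all _ (fun t => by positivity)), arc_integral ha0]
    rw [hzero, add_zero, hmain]
  have hright : ∫⁻ v in Set.Ioi (0:ℝ), ∫⁻ t in Set.Ioi (0:ℝ), ENNReal.ofReal (k2fun δ s p b t v)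
      = ENNReal.ofReal W * ENNReal.ofReal (π/2) := by
    rw [setLIntegral_congr_fun measurableSet_Ioi hinner,
      lintegral_mul_const' _ _ ENNReal.ofReal_ne_top]
    congr 1
    rw [← ofReal_integral_eq_lintegral_ofReal hW
      ((ae_restrict_iff' measurableSet_Ioi).mpr (ae_of_all _
        (fun v hv => mul_nonneg (Fnn hs hp0 hp1 hv) (Real.rpow_nonneg (le_of_lt hv) _))))]
  -- combine
  have hbound : (∫⁻ t in Set.Ioi (0:ℝ), ENNReal.ofReal (J t))
      ≤ ENNReal.ofReal (lam * δ) * (ENNReal.ofReal W * ENNReal.ofReal (π/2)) := by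
    calc (∫⁻ t in Set.Ioi (0:ℝ), ENNReal.ofReal (J t))
        ≤ ENNReal.ofReal (lam * δ) * ∫⁻ t in Set.Ioi (0:ℝ), L t := hlb
      _ = ENNReal.ofReal (lam * δ) * (ENNReal.ofReal W * ENNReal.ofReal (π/2)) := by
          rw [hswap, hright]
  have hfin : ENNReal.ofReal (lam * δ) * (ENNReal.ofReal W * ENNReal.ofReal (π/2)) ≠ ⊤ :=
    ENNReal.mul_ne_top ENNReal.ofReal_ne_top
      (ENNReal.mul_ne_top ENNReal.ofReal_ne_top ENNReal.ofReal_ne_top)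
  have htoreal : (∫⁻ t in Set.Ioi (0:ℝ), ENNReal.ofReal (J t)).toReal
      ≤ lam * δ * (W * (π/2)) := by
    calc (∫⁻ t in Set.Ioi (0:ℝ), ENNReal.ofReal (J t)).toReal
        ≤ (ENNReal.ofReal (lam * δ) * (ENNReal.ofReal W * ENNReal.ofReal (π/2))).toReal :=
          ENNReal.toReal_mono hfin hbound
      _ = lam * δ * (W * (π/2)) := by
          rw [ENNReal.toReal_mul, ENNReal.toReal_mul,
            ENNReal.toReal_ofReal (mul_nonneg hlam hδ0.le),
            ENNReal.toReal_ofReal hWnn,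
            ENNReal.toReal_ofReal (by positivity)]
  rw [hcong, hJint]
  have hWval := W_value (p := p) hδ0 hδ1 hs b
  calc 2 * (∫⁻ t in Set.Ioi (0:ℝ), ENNReal.ofReal (J t)).toReal
      ≤ 2 * (lam * δ * (W * (π/2))) := by linarith
    _ = lam * π * (δ * W) := by ring
    _ = lam * π * (s ^ δ * Real.Gamma (1+δ) * Real.Gamma (1-δ) * Dcal b p δ) := by
        rw [← hWdef] at hWval
        rw [hWval]
    _ = lam * π * s ^ δ * Real.Gamma (1 + δ) * Real.Gamma (1 - δ) * Dcal b p δ := by ring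
end aux2
end
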